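/- arXiv:1702.00535 — 7 statements merged into one kernel-verified Lean document; each statement's English description precedes it below -/
import Mathlib

section
/- Let Σ_A and Σ_B be types of records, D_A a finite subset of Σ_A, D_B and D_B' finite subsets of Σ_B, and m : Σ_A × Σ_B → {0,1} a matching rule. Suppose D_B and D_B' are f-neighbors with respect to f_⋈m(D_A,·), i.e.: (1) |D_B| = |D_B'| and {(a,b) ∈ D_A × D_B : m(a,b)=1} = {(a,b) ∈ D_A × D_B' : m(a,b)=1}; (2) the symmetric difference Δ(D_B,D_B') = (D_B \ D_B') ∪ (D_B' \ D_B) is nonempty; and (3) there is no finite set D_B'' with nonempty symmetric difference Δ(D_B,D_B'') that is a strict subset of Δ(D_B,D_B') and satisfies |D_B''| = |D_B| and {(a,b) ∈ D_A × D_B'' : m(a,b)=1} = {(a,b) ∈ D_A × D_B : m(a,b)=1}. Then there exist records b ≠ b' with b ∈ D_B, b' ∉ D_B, D_B' = (D_B \ {b}) ∪ {b'}, and m(a,b) = 0 and m(a,b') = 0 for every a ∈ D_A. -/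
/-- Theorem 3.5 (Neighbors for PRL): if `DB` and `DB'` are f-neighbors w.r.t.
`f_⋈m(DA, ·)`, then they differ in exactly one pair of non-matching records. -/
theorem prl_neighbors {SA SB : Type*} [DecidableEq SA] [DecidableEq SB]
    (m : SA × SB → Bool) (DA : Finset SA) (DB DB' : Finset SB)
    (h_card : DB.card = DB'.card)
    (h_match : (DA ×ˢ DB).filter (fun p => m p = true) =
      (DA ×ˢ DB').filter (fun p => m p = true))
    (h_nonempty : ((DB \ DB') ∪ (DB' \ DB)).Nonempty)
    (h_minimal : ¬ ∃ DB'' : Finset SB,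
      ((DB \ DB'') ∪ (DB'' \ DB)).Nonempty ∧
      ((DB \ DB'') ∪ (DB'' \ DB)) ⊂ ((DB \ DB') ∪ (DB' \ DB)) ∧
      DB''.card = DB.card ∧
      (DA ×ˢ DB'').filter (fun p => m p = true) =
        (DA ×ˢ DB).filter (fun p => m p = true)) :
    ∃ b b' : SB, b ≠ b' ∧ b ∈ DB ∧ b' ∉ DB ∧
      DB' = (DB \ {b}) ∪ {b'} ∧
      ∀ a ∈ DA, m (a, b) = false ∧ m (a, b') = false := by
  -- every element of DB \ DB' is non-matching
  have hL : ∀ x ∈ DB, x ∉ DB' → ∀ a ∈ DA, m (a, x) = false := by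
    intro x hx hx' a ha
    by_contra h
    have hm : m (a, x) = true := by
      cases hmt : m (a, x) with
      | false => exact absurd hmt h
      | true => rfl
    have : (a, x) ∈ (DA ×ˢ DB).filter (fun p => m p = true) := by
      simp [Finset.mem_filter, Finset.mem_product, ha, hx, hm]
    rw [h_match] at this
    simp [Finset.mem_filter, Finset.mem_product] at this
    exact hx' this.1.2
  have hR : ∀ x ∈ DB', x ∉ DB → ∀ a ∈ DA, m (a, x) = false := by
    intro x hx hx' a ha
    by_contra h
    have hm : m (a, x) = true := by
      cases hmt : m (a, x) with
      | false => exact absurd hmt h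
      | true => rfl
    have : (a, x) ∈ (DA ×ˢ DB').filter (fun p => m p = true) := by
      simp [Finset.mem_filter, Finset.mem_product, ha, hx, hm]
    rw [← h_match] at this
    simp [Finset.mem_filter, Finset.mem_product] at this
    exact hx' this.1.2
  -- both sides of the symmetric difference are nonempty
  have hne1 : (DB \ DB').Nonempty := by
    rcases Finset.eq_empty_or_nonempty (DB \ DB') with h | h
    · exfalso
      have hsub : DB ⊆ DB' := Finset.sdiff_eq_empty_iff_subset.mp h
      have heq : DB = DB' := Finset.eq_of_subset_of_card_le hsub h_card.ge
      rcases h_nonempty with ⟨x, hx⟩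
      simp [heq] at hx
    · exact h
  have hne2 : (DB' \ DB).Nonempty := by
    rcases Finset.eq_empty_or_nonempty (DB' \ DB) with h | h
    · exfalso
      have hsub : DB' ⊆ DB := Finset.sdiff_eq_empty_iff_subset.mp h
      have heq : DB' = DB := Finset.eq_of_subset_of_card_le hsub h_card.le
      rcases h_nonempty with ⟨x, hx⟩
      simp [heq] at hx
    · exact h
  obtain ⟨b, hb⟩ := hne1
  obtain ⟨b', hb'⟩ := hne2
  rw [Finset.mem_sdiff] at hb hb'
  have hbDB : b ∈ DB := hb.1
  have hbnDB' : b ∉ DB' := hb.2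
  have hb'DB' : b' ∈ DB' := hb'.1
  have hb'nDB : b' ∉ DB := hb'.2
  have hbb' : b ≠ b' := fun h => hb'nDB (h ▸ hbDB)
  have hmb : ∀ a ∈ DA, m (a, b) = false := fun a ha => hL b hbDB hbnDB' a ha
  have hmb' : ∀ a ∈ DA, m (a, b') = false := fun a ha => hR b' hb'DB' hb'nDB a ha
  -- candidate database
  set D2 : Finset SB := insert b' (DB.erase b) with hD2
  have hmemD2 : ∀ x, x ∈ D2 ↔ x = b' ∨ (x ∈ DB ∧ x ≠ b) := by
    intro x
    simp [hD2, Finset.mem_insert, Finset.mem_erase, and_comm]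
  -- symmetric difference of DB and D2 is {b, b'}
  have hΔ2 : (DB \ D2) ∪ (D2 \ DB) = {b, b'} := by
    ext x
    simp only [Finset.mem_union, Finset.mem_sdiff, hmemD2, Finset.mem_insert,
      Finset.mem_singleton]
    constructor
    · rintro (⟨hx, hn⟩ | ⟨hx, hn⟩)
      · push_neg at hn
        rcases eq_or_ne x b with h | h
        · exact Or.inl h
        · exact absurd (hn.2 hx) h
      · rcases hx with h | ⟨h, _⟩
        · exact Or.inr h
        · exact absurd h hn
    · rintro (rfl | rfl)
      · exact Or.inl ⟨hbDB, by
          rintro (h | ⟨_, h⟩)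
          · exact hbb' h
          · exact h rfl⟩
      · exact Or.inr ⟨Or.inl rfl, hb'nDB⟩
  have hΔ2ne : ((DB \ D2) ∪ (D2 \ DB)).Nonempty := by
    rw [hΔ2]; exact ⟨b, by simp⟩
  have hΔ2sub : ((DB \ D2) ∪ (D2 \ DB)) ⊆ ((DB \ DB') ∪ (DB' \ DB)) := by
    rw [hΔ2]
    intro x hx
    rcases Finset.mem_insert.mp hx with rfl | hx
    · exact Finset.mem_union_left _ (Finset.mem_sdiff.mpr ⟨hbDB, hbnDB'⟩)
    · rw [Finset.mem_singleton] at hx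
      subst hx
      exact Finset.mem_union_right _ (Finset.mem_sdiff.mpr ⟨hb'DB', hb'nDB⟩)
  have hD2card : D2.card = DB.card := by
    rw [hD2, Finset.card_insert_of_notMem (by simp [Finset.mem_erase, hb'nDB]),
      Finset.card_erase_of_mem hbDB]
    have : 1 ≤ DB.card := Finset.card_pos.mpr ⟨b, hbDB⟩
    omega
  have hD2match : (DA ×ˢ D2).filter (fun p => m p = true) =
      (DA ×ˢ DB).filter (fun p => m p = true) := by
    ext ⟨a, x⟩
    simp only [Finset.mem_filter, Finset.mem_product, hmemD2]
    constructor
    · rintro ⟨⟨ha, hx⟩, hm⟩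
      rcases hx with rfl | ⟨hx, _⟩
      · rw [hmb' a ha] at hm; exact absurd hm (by simp)
      · exact ⟨⟨ha, hx⟩, hm⟩
    · rintro ⟨⟨ha, hx⟩, hm⟩
      refine ⟨⟨ha, Or.inr ⟨hx, ?_⟩⟩, hm⟩
      rintro rfl
      rw [hmb a ha] at hm
      exact absurd hm (by simp)
  -- minimality forces the symmetric difference to equal {b, b'}
  have hΔeq : ((DB \ DB') ∪ (DB' \ DB)) = {b, b'} := by
    by_contra hne
    exact h_minimal ⟨D2, hΔ2ne, ⟨hΔ2sub, fun hsub => hne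
      (Finset.Subset.antisymm (hΔ2 ▸ hsub) (hΔ2 ▸ hΔ2sub))⟩, hD2card, hD2match⟩
  refine ⟨b, b', hbb', hbDB, hb'nDB, ?_, fun a ha => ⟨hmb a ha, hmb' a ha⟩⟩
  -- show DB' = (DB \ {b}) ∪ {b'}
  ext x
  simp only [Finset.mem_union, Finset.mem_sdiff, Finset.mem_singleton]
  constructor
  · intro hx
    by_cases hxDB : x ∈ DB
    · refine Or.inl ⟨hxDB, ?_⟩
      rintro rfl
      exact hbnDB' hx
    · have : x ∈ ((DB \ DB') ∪ (DB' \ DB)) :=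
        Finset.mem_union_right _ (Finset.mem_sdiff.mpr ⟨hx, hxDB⟩)
      rw [hΔeq] at this
      rcases Finset.mem_insert.mp this with rfl | h
      · exact absurd hbDB hxDB
      · exact Or.inr (Finset.mem_singleton.mp h)
  · rintro (⟨hx, hxb⟩ | rfl)
    · by_contra hxn
      have : x ∈ ((DB \ DB') ∪ (DB' \ DB)) :=
        Finset.mem_union_left _ (Finset.mem_sdiff.mpr ⟨hx, hxn⟩)
      rw [hΔeq] at this
      rcases Finset.mem_insert.mp this with rfl | h
      · exact hxb rfl
      · exact hb'nDB ((Finset.mem_singleton.mp h) ▸ hx)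
    · exact hb'DB'
end

section
/- Let X and Y be measurable spaces, let μ and μ' be probability measures on X, let κ and κ' be Markov kernels from X to Y, and let ε₁, ε₂, δ₁, δ₂ ≥ 0. Suppose (i) for every measurable set A ⊆ X, μ(A) ≤ e^{ε₁}·μ'(A) + δ₁, and (ii) for every x ∈ X and every measurable set B ⊆ Y, κ(x)(B) ≤ e^{ε₂}·κ'(x)(B) + δ₂. Then for every measurable set B ⊆ Y, the composed measure satisfies (μ.bind κ)(B) ≤ e^{ε₁+ε₂}·(μ'.bind κ')(B) + δ₁ + δ₂. -/
open MeasureTheory ProbabilityTheory Set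
open scoped ENNReal

/-! Subtracting the slack `δ₂` from `κ x B` leaves a `[0, 1]`-valued function of `x` bounded by
`e^{ε₂} κ' x B`. Integrating the set-wise bound for `μ, μ'` over the level sets of a `[0, 1]`-valued
function (layer cake) extends it to such functions, with the same `e^{ε₁}` and `δ₁`; chaining the
two bounds gives `e^{ε₁} e^{ε₂}` and `δ₁ + δ₂`. -/

theorem lintegral_ofReal_eq_setLIntegral_Ioc_measure_lt {X : Type*} [MeasurableSpace X]
    (ν : Measure X) {f : X → ℝ} (hf : Measurable f) (hf_nonneg : 0 ≤ f)
    (hf_le_one : ∀ x, f x ≤ 1) :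
    ∫⁻ x, ENNReal.ofReal (f x) ∂ν = ∫⁻ t in Ioc 0 1, ν {a | t < f a} := by
  rw [lintegral_eq_lintegral_meas_lt ν (.of_forall hf_nonneg) hf.aemeasurable,
    ← Ioi_inter_Iic, inter_comm, ← setLIntegral_indicator measurableSet_Iic]
  refine setLIntegral_congr_fun measurableSet_Ioi fun t _ => ?_
  by_cases ht : t ≤ 1
  · simp [ht]
  · have : {a | t < f a} = ∅ :=
      eq_empty_of_forall_notMem fun a ha => ht ((le_of_lt ha).trans (hf_le_one a))
    simp [ht, this]

theorem lintegral_le_mul_lintegral_add_of_forall_measure_le {X : Type*} [MeasurableSpace X]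
    {μ μ' : Measure X} {E d : ℝ≥0∞}
    (h : ∀ A : Set X, MeasurableSet A → μ A ≤ E * μ' A + d)
    {g : X → ℝ≥0∞} (hg : Measurable g) (hg_le_one : ∀ x, g x ≤ 1) :
    ∫⁻ x, g x ∂μ ≤ E * (∫⁻ x, g x ∂μ') + d := by
  have hg_eq : g = fun x => ENNReal.ofReal (g x).toReal := funext fun x =>
    (ENNReal.ofReal_toReal (ne_top_of_le_ne_top ENNReal.one_ne_top (hg_le_one x))).symm
  have hf_le_one : ∀ x, (g x).toReal ≤ 1 := fun x =>
    ENNReal.toReal_le_of_le_ofReal zero_le_one (by simpa using hg_le_one x)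
  have layer_cake := fun ν => lintegral_ofReal_eq_setLIntegral_Ioc_measure_lt ν
    hg.ennreal_toReal (fun x => ENNReal.toReal_nonneg) hf_le_one
  have hmono : Antitone fun t : ℝ => μ' {a | t < (g a).toReal} :=
    fun s t hst => measure_mono fun a ha => hst.trans_lt ha
  rw [hg_eq, layer_cake, layer_cake]
  calc ∫⁻ t in Ioc 0 1, μ {a | t < (g a).toReal}
      ≤ ∫⁻ t in Ioc 0 1, (E * μ' {a | t < (g a).toReal} + d) :=
        lintegral_mono fun t => h _ (hg.ennreal_toReal measurableSet_Ioi)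
    _ = E * (∫⁻ t in Ioc 0 1, μ' {a | t < (g a).toReal}) + d := by
        rw [lintegral_add_right _ measurable_const, lintegral_const_mul _ hmono.measurable,
          setLIntegral_const, Real.volume_Ioc, sub_zero, ENNReal.ofReal_one, mul_one]

theorem bind_apply_le_mul_bind_apply_add {X Y : Type*} [MeasurableSpace X]
    [MeasurableSpace Y] {μ μ' : Measure X} [IsProbabilityMeasure μ] {κ κ' : Kernel X Y}
    [IsMarkovKernel κ] {E₁ E₂ d₁ d₂ : ℝ≥0∞}
    (h₁ : ∀ A : Set X, MeasurableSet A → μ A ≤ E₁ * μ' A + d₁)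
    (h₂ : ∀ x : X, ∀ B : Set Y, MeasurableSet B → κ x B ≤ E₂ * κ' x B + d₂)
    {B : Set Y} (hB : MeasurableSet B) :
    (μ.bind fun x => κ x) B ≤ E₁ * E₂ * (μ'.bind fun x => κ' x) B + (d₁ + d₂) := by
  rw [Measure.bind_apply hB κ.measurable.aemeasurable,
    Measure.bind_apply hB κ'.measurable.aemeasurable]
  set g : X → ℝ≥0∞ := fun x => κ x B - d₂
  have hg : Measurable g := (κ.measurable_coe hB).sub measurable_const
  have hg_le_one : ∀ x, g x ≤ 1 := fun x => tsub_le_self.trans prob_le_one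
  have hg_le : ∀ x, g x ≤ E₂ * κ' x B := fun x => tsub_le_iff_right.mpr (h₂ x B hB)
  calc ∫⁻ x, κ x B ∂μ ≤ ∫⁻ x, (g x + d₂) ∂μ := lintegral_mono fun x => le_tsub_add
    _ = (∫⁻ x, g x ∂μ) + d₂ := by
        rw [lintegral_add_right _ measurable_const, lintegral_const, measure_univ, mul_one]
    _ ≤ E₁ * (∫⁻ x, g x ∂μ') + d₁ + d₂ := by
        gcongr
        exact lintegral_le_mul_lintegral_add_of_forall_measure_le h₁ hg hg_le_one
    _ ≤ E₁ * (∫⁻ x, E₂ * κ' x B ∂μ') + d₁ + d₂ := by gcongr with x; exact hg_le x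
    _ = E₁ * E₂ * (∫⁻ x, κ' x B ∂μ') + (d₁ + d₂) := by
        rw [lintegral_const_mul _ (κ'.measurable_coe hB), mul_assoc, add_assoc]

theorem sequential_composition_general {X Y : Type*} [MeasurableSpace X] [MeasurableSpace Y]
    (μ μ' : Measure X) [IsProbabilityMeasure μ]
    (κ κ' : Kernel X Y) [IsMarkovKernel κ]
    (ε₁ ε₂ δ₁ δ₂ : ℝ) (hδ₁ : 0 ≤ δ₁) (hδ₂ : 0 ≤ δ₂)
    (h₁ : ∀ A : Set X, MeasurableSet A →
      μ A ≤ ENNReal.ofReal (Real.exp ε₁) * μ' A + ENNReal.ofReal δ₁)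
    (h₂ : ∀ x : X, ∀ B : Set Y, MeasurableSet B →
      κ x B ≤ ENNReal.ofReal (Real.exp ε₂) * κ' x B + ENNReal.ofReal δ₂) :
    ∀ B : Set Y, MeasurableSet B →
      (μ.bind fun x => κ x) B ≤
        ENNReal.ofReal (Real.exp (ε₁ + ε₂)) * (μ'.bind fun x => κ' x) B
          + ENNReal.ofReal (δ₁ + δ₂) := by
  intro B hB
  rw [Real.exp_add, ENNReal.ofReal_mul (Real.exp_nonneg _), ENNReal.ofReal_add hδ₁ hδ₂]
  exact bind_apply_le_mul_bind_apply_add h₁ h₂ hB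

/-- Theorem 3.9 (Sequential Composition): composing an (ε₁,δ₁)-indistinguishable
distribution over first-stage views with (ε₂,δ₂)-indistinguishable kernels gives
(ε₁+ε₂, δ₁+δ₂)-indistinguishable composed distributions. -/
theorem sequential_composition {X Y : Type*} [MeasurableSpace X] [MeasurableSpace Y]
    (μ μ' : Measure X) [IsProbabilityMeasure μ] [IsProbabilityMeasure μ']
    (κ κ' : Kernel X Y) [IsMarkovKernel κ] [IsMarkovKernel κ']
    (ε₁ ε₂ δ₁ δ₂ : ℝ) (hε₁ : 0 ≤ ε₁) (hε₂ : 0 ≤ ε₂) (hδ₁ : 0 ≤ δ₁) (hδ₂ : 0 ≤ δ₂)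
    (h₁ : ∀ A : Set X, MeasurableSet A →
      μ A ≤ ENNReal.ofReal (Real.exp ε₁) * μ' A + ENNReal.ofReal δ₁)
    (h₂ : ∀ x : X, ∀ B : Set Y, MeasurableSet B →
      κ x B ≤ ENNReal.ofReal (Real.exp ε₂) * κ' x B + ENNReal.ofReal δ₂) :
    ∀ B : Set Y, MeasurableSet B →
      (μ.bind fun x => κ x) B ≤
        ENNReal.ofReal (Real.exp (ε₁ + ε₂)) * (μ'.bind fun x => κ' x) B
          + ENNReal.ofReal (δ₁ + δ₂) :=
  sequential_composition_general μ μ' κ κ' ε₁ ε₂ δ₁ δ₂ hδ₁ hδ₂ h₁ h₂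
end

section
/- Let ε > 0 and let Δ be a positive integer, let a = ε/Δ, let η₀ be a real number, let p = (e^a − 1)/(e^a + 1), and let ι be a finite index set. Let c, b, b' : ι → ℤ be integer vectors with ∑_{i∈ι} |b(i) − b'(i)| ≤ Δ. Then ∏_{i∈ι} p·e^{−a·|(c(i)−b(i))−η₀|} ≤ e^{ε} · ∏_{i∈ι} p·e^{−a·|(c(i)−b'(i))−η₀|}. -/
/-!
The pmf `p · e^{-a|x - η₀|}` changes by at most a factor `e^{a|x - y|}` when its argument moves
from `x` to `y`, by the triangle inequality. Multiplying over the bins, the factors combine to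
`e^{a · ∑ |b i - b' i|} ≤ e^{a Δ} = e^ε`.
-/

open Real Finset

noncomputable def discreteLaplacePMF (a η₀ x : ℝ) : ℝ :=
  (exp a - 1) / (exp a + 1) * exp (-a * |x - η₀|)

lemma exp_sub_one_div_exp_add_one_nonneg {a : ℝ} (ha : 0 ≤ a) :
    0 ≤ (exp a - 1) / (exp a + 1) :=
  div_nonneg (by linarith [one_le_exp ha]) (by positivity)

lemma discreteLaplacePMF_nonneg {a : ℝ} (ha : 0 ≤ a) (η₀ x : ℝ) :
    0 ≤ discreteLaplacePMF a η₀ x :=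
  mul_nonneg (exp_sub_one_div_exp_add_one_nonneg ha) (exp_nonneg _)

lemma discreteLaplacePMF_le_exp_mul {a : ℝ} (ha : 0 ≤ a) (η₀ x y : ℝ) :
    discreteLaplacePMF a η₀ x ≤ exp (a * |x - y|) * discreteLaplacePMF a η₀ y := by
  have hp := exp_sub_one_div_exp_add_one_nonneg ha
  have htri : |y - η₀| - |x - η₀| ≤ |x - y| := by
    simpa [abs_sub_comm] using abs_sub_abs_le_abs_sub (y - η₀) (x - η₀)
  unfold discreteLaplacePMF
  rw [mul_left_comm, ← exp_add]
  gcongr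
  nlinarith

lemma prod_le_exp_sum_mul_prod {ι : Type*} (s : Finset ι) {f g d : ι → ℝ}
    (hf : ∀ i ∈ s, 0 ≤ f i) (hfg : ∀ i ∈ s, f i ≤ exp (d i) * g i) :
    ∏ i ∈ s, f i ≤ exp (∑ i ∈ s, d i) * ∏ i ∈ s, g i := by
  rw [exp_sum, ← prod_mul_distrib]
  exact prod_le_prod hf hfg

lemma div_natCast_mul_le {ε : ℝ} (hε : 0 ≤ ε) (Δ : ℕ) : ε / Δ * Δ ≤ ε := by
  rcases Nat.eq_zero_or_pos Δ with rfl | hΔ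
  · simpa using hε
  · rw [div_mul_cancel₀ _ (by positivity)]

theorem laplace_product_ratio_general (ε : ℝ) (hε : 0 < ε) (Δ : ℕ) (η₀ : ℝ)
    {ι : Type*} [Fintype ι] (c b b' : ι → ℤ)
    (hsum : ∑ i, |b i - b' i| ≤ (Δ : ℤ)) :
    ∏ i, ((Real.exp (ε / (Δ : ℝ)) - 1) / (Real.exp (ε / (Δ : ℝ)) + 1) *
        Real.exp (-(ε / (Δ : ℝ)) * |((c i - b i : ℤ) : ℝ) - η₀|)) ≤
      Real.exp ε *
        ∏ i, ((Real.exp (ε / (Δ : ℝ)) - 1) / (Real.exp (ε / (Δ : ℝ)) + 1) *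
          Real.exp (-(ε / (Δ : ℝ)) * |((c i - b' i : ℤ) : ℝ) - η₀|)) := by
  set a := ε / (Δ : ℝ)
  have ha : 0 ≤ a := by positivity
  have hsumR : ∑ i, |((b i : ℝ) - b' i)| ≤ Δ := by exact_mod_cast hsum
  have hshift : ∑ i, a * |((c i - b i : ℤ) : ℝ) - ((c i - b' i : ℤ) : ℝ)| ≤ ε := by
    simp only [Int.cast_sub, sub_sub_sub_cancel_left, abs_sub_comm (b' _ : ℝ), ← mul_sum]
    calc a * ∑ i, |(b i : ℝ) - b' i| ≤ a * Δ := by gcongr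
      _ ≤ ε := div_natCast_mul_le hε.le Δ
  calc ∏ i, discreteLaplacePMF a η₀ (c i - b i : ℤ)
      ≤ exp (∑ i, a * |((c i - b i : ℤ) : ℝ) - ((c i - b' i : ℤ) : ℝ)|) *
          ∏ i, discreteLaplacePMF a η₀ (c i - b' i : ℤ) :=
        prod_le_exp_sum_mul_prod univ (fun i _ => discreteLaplacePMF_nonneg ha η₀ _)
          (fun i _ => discreteLaplacePMF_le_exp_mul ha η₀ _ _)
    _ ≤ exp ε * ∏ i, discreteLaplacePMF a η₀ (c i - b' i : ℤ) :=
        mul_le_mul_of_nonneg_right (exp_le_exp.2 hshift)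
          (prod_nonneg fun i _ => discreteLaplacePMF_nonneg ha η₀ _)

/-- Core computation of Lemma B.1: the probability of producing the same noisy bin
counts from neighboring bin-count vectors (total difference at most Δ) differs by a
factor of at most e^ε. -/
theorem laplace_product_ratio (ε : ℝ) (hε : 0 < ε) (Δ : ℕ) (hΔ : 0 < Δ) (η₀ : ℝ)
    {ι : Type*} [Fintype ι] (c b b' : ι → ℤ)
    (hsum : ∑ i, |b i - b' i| ≤ (Δ : ℤ)) :
    ∏ i, ((Real.exp (ε / (Δ : ℝ)) - 1) / (Real.exp (ε / (Δ : ℝ)) + 1) *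
        Real.exp (-(ε / (Δ : ℝ)) * |((c i - b i : ℤ) : ℝ) - η₀|)) ≤
      Real.exp ε *
        ∏ i, ((Real.exp (ε / (Δ : ℝ)) - 1) / (Real.exp (ε / (Δ : ℝ)) + 1) *
          Real.exp (-(ε / (Δ : ℝ)) * |((c i - b' i : ℤ) : ℝ) - η₀|)) :=
  laplace_product_ratio_general ε hε Δ η₀ c b b' hsum
end

section
/- Let ε > 0, let ΔB be a positive integer, let 0 < δ < 1, let a = ε/ΔB, let p = (e^a − 1)/(e^a + 1), and let η₀ = −(ΔB/ε)·ln((e^a + 1)·(1 − (1−δ)^{1/ΔB})). Assume η₀ ≥ 0. Then: (i) the negative tail of the discrete Laplace distribution satisfies ∑_{x∈ℤ, x<0} p·e^{−a·|x−η₀|} = e^{−a·η₀}/(e^a + 1); (ii) this quantity equals 1 − (1−δ)^{1/ΔB}; and (iii) consequently (1 − Pr[η < 0])^{ΔB} = 1 − δ, i.e., the probability that all ΔB independent noise draws are nonnegative is exactly 1 − δ. -/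
/-!
On the negative integers `x = -(n + 1)` the distance to `η₀ ≥ 0` is `η₀ + 1 + n`, so the negative
tail is a geometric series with ratio `e^{-a}`; its sum `e^{-aη₀} / (e^a - 1)` times
`p = (e^a - 1) / (e^a + 1)` is `e^{-aη₀} / (e^a + 1)`. The shift `η₀` is the logarithm that makes
this equal to `1 - (1 - δ)^{1/ΔB}`, whose complement raised to the power `ΔB` is `1 - δ`.
-/

open Real

def natEquivNegInt : ℕ ≃ {x : ℤ // x < 0} where
  toFun n := ⟨Int.negSucc n, Int.negSucc_lt_zero n⟩
  invFun x := (-(x : ℤ) - 1).toNat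
  left_inv n := by simp [Int.negSucc_eq]
  right_inv x := by
    obtain ⟨x, hx⟩ := x
    ext
    simp only [Int.negSucc_eq]
    omega

theorem hasSum_exp_neg_mul_abs_sub_of_neg {a c : ℝ} (ha : 0 < a) (hc : 0 ≤ c) :
    HasSum (fun x : {x : ℤ // x < 0} => exp (-a * |((x : ℤ) : ℝ) - c|))
      (exp (-a * c) / (exp a - 1)) := by
  have hr1 : exp (-a) < 1 := exp_lt_one_iff.mpr (neg_lt_zero.mpr ha)
  have hterm (n : ℕ) : exp (-a * |((natEquivNegInt n : ℤ) : ℝ) - c|)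
      = exp (-a * c) * exp (-a) * exp (-a) ^ n := by
    have hdist : |((natEquivNegInt n : ℤ) : ℝ) - c| = c + 1 + n := by
      rw [show ((natEquivNegInt n : ℤ) : ℝ) = -(n + 1) by simp [natEquivNegInt, Int.negSucc_eq],
        abs_of_nonpos (by linarith [n.cast_nonneg (α := ℝ)])]
      ring
    rw [hdist, ← exp_nat_mul, ← exp_add, ← exp_add]
    ring_nf
  have hsum : exp (-a * c) / (exp a - 1) = exp (-a * c) * exp (-a) * (1 - exp (-a))⁻¹ := by
    have hea : 1 < exp a := one_lt_exp_iff.mpr ha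
    rw [exp_neg]
    field_simp
  rw [hsum, ← natEquivNegInt.hasSum_iff]
  exact ((hasSum_geometric_of_lt_one (exp_pos _).le hr1).mul_left _).congr_fun hterm

theorem hasSum_discreteLaplace_of_neg {a c : ℝ} (ha : 0 < a) (hc : 0 ≤ c) :
    HasSum (fun x : {x : ℤ // x < 0} =>
      (exp a - 1) / (exp a + 1) * exp (-a * |((x : ℤ) : ℝ) - c|))
      (exp (-a * c) / (exp a + 1)) := by
  have hea : 1 < exp a := one_lt_exp_iff.mpr ha
  have hvalue : exp (-a * c) / (exp a + 1)
      = (exp a - 1) / (exp a + 1) * (exp (-a * c) / (exp a - 1)) := by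
    field_simp [(sub_pos.mpr hea).ne']
  rw [hvalue]
  exact (hasSum_exp_neg_mul_abs_sub_of_neg ha hc).mul_left _

theorem exp_neg_mul_neg_inv_mul_log {a y : ℝ} (ha : a ≠ 0) (hy : 0 < y) :
    exp (-a * (-a⁻¹ * log y)) = y := by
  rw [show -a * (-a⁻¹ * log y) = log y by field_simp, exp_log hy]

/-- Negative-tail computation from the proof of Lemma B.1: with the shift η₀ of
Definition 4.3, the negative tail of the discrete Laplace distribution equals
`1 − (1−δ)^{1/ΔB}`, so all ΔB independent draws are nonnegative with probability
exactly 1 − δ. -/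
theorem laplace_negative_tail (ε : ℝ) (hε : 0 < ε) (ΔB : ℕ) (hΔB : 0 < ΔB)
    (δ a p η₀ : ℝ) (hδ0 : 0 < δ) (hδ1 : δ < 1)
    (ha : a = ε / (ΔB : ℝ))
    (hp : p = (Real.exp a - 1) / (Real.exp a + 1))
    (hη : η₀ = -((ΔB : ℝ) / ε) *
      Real.log ((Real.exp a + 1) * (1 - (1 - δ) ^ ((1 : ℝ) / (ΔB : ℝ)))))
    (hη0 : 0 ≤ η₀) :
    Summable (fun x : {x : ℤ // x < 0} =>
      p * Real.exp (-a * |((x : ℤ) : ℝ) - η₀|)) ∧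
    (∑' x : {x : ℤ // x < 0}, p * Real.exp (-a * |((x : ℤ) : ℝ) - η₀|)
      = Real.exp (-a * η₀) / (Real.exp a + 1)) ∧
    (Real.exp (-a * η₀) / (Real.exp a + 1) = 1 - (1 - δ) ^ ((1 : ℝ) / (ΔB : ℝ))) ∧
    ((1 - Real.exp (-a * η₀) / (Real.exp a + 1)) ^ ΔB = 1 - δ) := by
  have ha0 : 0 < a := ha ▸ div_pos hε (Nat.cast_pos.mpr hΔB)
  have htail := hp ▸ hasSum_discreteLaplace_of_neg ha0 hη0
  set t := (1 - δ) ^ ((1 : ℝ) / (ΔB : ℝ))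
  have ht : t < 1 := rpow_lt_one (by linarith) (by linarith) (by positivity)
  have hshift : exp (-a * η₀) = (exp a + 1) * (1 - t) := by
    rw [hη, ← inv_div, ← ha]
    exact exp_neg_mul_neg_inv_mul_log ha0.ne' (by nlinarith [exp_pos a])
  have hfail : exp (-a * η₀) / (exp a + 1) = 1 - t := by
    rw [hshift]
    field_simp
  refine ⟨htail.summable, htail.tsum_eq, hfail, ?_⟩
  rw [hfail, sub_sub_cancel]
  simpa only [t, one_div] using rpow_inv_natCast_pow (by linarith : 0 ≤ 1 - δ) hΔB.ne'
end

section
/- Let a > 0 be a real number, let η₀ be a nonnegative integer, and let p = (e^a − 1)/(e^a + 1). Then the function x ↦ max(x,0)·p·e^{−a·|x−η₀|} on ℤ is summable, and ∑_{x∈ℤ} max(x,0)·p·e^{−a·|x−η₀|} = η₀ + e^{−a·η₀}·e^{a}/(e^{2a} − 1). In particular, the expected number of dummy records E[η⁺] = E[max(η,0)] added per bin by the Laplace Protocol is a finite constant depending only on a and η₀ (hence only on ε, δ, ΔB). -/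
/-!
Write `q = e^{-a}`, so that `p = (1 - q)/(1 + q)` and the weights are `p q^{|x - η₀|}`.
Split `max(x, 0) = x + max(-x, 0)`. After shifting by `η₀`, the first part becomes
`∑ (y + η₀) q^{|y|} = η₀ (1 + q)/(1 - q)`, because the odd part sums to zero. The second part
only sees `x = -(n + 1)`, where it is `q^{η₀} (n + 1) q^{n + 1}`, and so it sums to
`q^{η₀} q/(1 - q)²`. Multiplying by `p` gives `η₀ + q^{η₀ + 1}/(1 - q²)`.
-/

section NormedField

variable {𝕜 : Type*} [NormedField 𝕜] {q : 𝕜}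

theorem hasSum_succ_mul_geometric_succ (hq : ‖q‖ < 1) :
    HasSum (fun n : ℕ => ((n : 𝕜) + 1) * q ^ (n + 1)) (q / (1 - q) ^ 2) := by
  simpa using (hasSum_nat_add_iff' (f := fun n : ℕ => (n : 𝕜) * q ^ n) 1).mpr
    (hasSum_coe_mul_geometric_of_norm_lt_one hq)

theorem hasSum_pow_natAbs (hq : ‖q‖ < 1) :
    HasSum (fun n : ℤ => q ^ n.natAbs) ((1 + q) / (1 - q)) := by
  have hneg : HasSum (fun n : ℕ => q ^ (-((n : ℤ) + 1)).natAbs) (q * (1 - q)⁻¹) :=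
    ((hasSum_geometric_of_norm_lt_one hq).mul_left q).congr_fun fun n => by
      rw [show (-((n : ℤ) + 1)).natAbs = n + 1 by omega, pow_succ']
  convert (hasSum_geometric_of_norm_lt_one hq).of_nat_of_neg_add_one
    (f := fun n : ℤ => q ^ n.natAbs) hneg using 1
  have := (isUnit_one_sub_of_norm_lt_one hq).ne_zero
  field_simp

theorem hasSum_intCast_mul_pow_natAbs (hq : ‖q‖ < 1) :
    HasSum (fun n : ℤ => (n : 𝕜) * q ^ n.natAbs) 0 := by
  have hnat : HasSum (fun n : ℕ => ((n : ℤ) : 𝕜) * q ^ (n : ℤ).natAbs) (q / (1 - q) ^ 2) := by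
    simpa using hasSum_coe_mul_geometric_of_norm_lt_one hq
  have hneg : HasSum (fun n : ℕ => ((-((n : ℤ) + 1) : ℤ) : 𝕜) * q ^ (-((n : ℤ) + 1)).natAbs)
      (-(q / (1 - q) ^ 2)) :=
    (hasSum_succ_mul_geometric_succ hq).neg.congr_fun fun n => by
      rw [show (-((n : ℤ) + 1)).natAbs = n + 1 by omega]
      push_cast
      ring
  simpa using hnat.of_nat_of_neg_add_one (f := fun n : ℤ => (n : 𝕜) * q ^ n.natAbs) hneg

theorem hasSum_intCast_mul_pow_natAbs_sub (hq : ‖q‖ < 1) (c : ℤ) :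
    HasSum (fun x : ℤ => (x : 𝕜) * q ^ (x - c).natAbs) (c * ((1 + q) / (1 - q))) := by
  rw [← (Equiv.addRight c).hasSum_iff]
  have := (hasSum_intCast_mul_pow_natAbs hq).add ((hasSum_pow_natAbs hq).mul_left (c : 𝕜))
  rw [zero_add] at this
  refine this.congr_fun fun y => ?_
  simp only [Function.comp_apply, Equiv.coe_addRight, add_sub_cancel_right, Int.cast_add]
  ring

end NormedField

theorem max_zero_eq_add_max_neg_zero (x : ℝ) : max x 0 = x + max (-x) 0 := by
  rcases le_total x 0 with h | h <;> simp [h]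

theorem hasSum_max_neg_mul_pow_natAbs_sub {q : ℝ} (hq : ‖q‖ < 1) (c : ℕ) :
    HasSum (fun x : ℤ => max (-(x : ℝ)) 0 * q ^ (x - c).natAbs) (q ^ c * (q / (1 - q) ^ 2)) := by
  have hnat : HasSum (fun n : ℕ => max (-((n : ℤ) : ℝ)) 0 * q ^ ((n : ℤ) - c).natAbs) 0 :=
    hasSum_zero.congr_fun fun n => by simp
  have hneg : HasSum
      (fun n : ℕ => max (-((-((n : ℤ) + 1) : ℤ) : ℝ)) 0 * q ^ (-((n : ℤ) + 1) - c).natAbs)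
      (q ^ c * (q / (1 - q) ^ 2)) :=
    ((hasSum_succ_mul_geometric_succ hq).mul_left (q ^ c)).congr_fun fun n => by
      rw [show (-((n : ℤ) + 1) - c).natAbs = n + 1 + c by omega]
      push_cast
      rw [neg_neg, max_eq_left (by positivity)]
      ring
  simpa using hnat.of_nat_of_neg_add_one
    (f := fun x : ℤ => max (-(x : ℝ)) 0 * q ^ (x - c).natAbs) hneg

theorem hasSum_max_zero_mul_pow_natAbs_sub {q : ℝ} (hq : ‖q‖ < 1) (c : ℕ) :
    HasSum (fun x : ℤ => max (x : ℝ) 0 * q ^ (x - c).natAbs)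
      (c * ((1 + q) / (1 - q)) + q ^ c * (q / (1 - q) ^ 2)) := by
  have := (hasSum_intCast_mul_pow_natAbs_sub hq c).add (hasSum_max_neg_mul_pow_natAbs_sub hq c)
  refine this.congr_fun fun x => ?_
  rw [max_zero_eq_add_max_neg_zero]
  ring

theorem Real.exp_neg_mul_abs_intCast_sub (a : ℝ) (x : ℤ) (c : ℕ) :
    Real.exp (-a * |(x : ℝ) - c|) = Real.exp (-a) ^ (x - c).natAbs := by
  rw [← Real.exp_nat_mul, Nat.cast_natAbs]
  push_cast
  ring_nf

/-- The expected number of dummy records E[max(η,0)] added per bin by the Laplace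
Protocol is the finite constant `η₀ + e^{−a·η₀}·e^a/(e^{2a} − 1)`. -/
theorem laplace_expected_dummy (a : ℝ) (ha : 0 < a) (η₀ : ℕ) :
    Summable (fun x : ℤ =>
      max (x : ℝ) 0 * ((Real.exp a - 1) / (Real.exp a + 1)) *
        Real.exp (-a * |(x : ℝ) - (η₀ : ℝ)|)) ∧
    ∑' x : ℤ, max (x : ℝ) 0 * ((Real.exp a - 1) / (Real.exp a + 1)) *
        Real.exp (-a * |(x : ℝ) - (η₀ : ℝ)|)
      = (η₀ : ℝ) + Real.exp (-a * (η₀ : ℝ)) * Real.exp a / (Real.exp (2 * a) - 1) := by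
  set q := Real.exp (-a) with hq_def
  have hq0 : 0 < q := Real.exp_pos _
  have hq1 : q < 1 := Real.exp_lt_one_iff.mpr (neg_lt_zero.mpr ha)
  have hsum : HasSum
      (fun x : ℤ => max (x : ℝ) 0 * ((Real.exp a - 1) / (Real.exp a + 1)) *
        Real.exp (-a * |(x : ℝ) - (η₀ : ℝ)|))
      ((Real.exp a - 1) / (Real.exp a + 1) *
        (η₀ * ((1 + q) / (1 - q)) + q ^ η₀ * (q / (1 - q) ^ 2))) :=
    ((hasSum_max_zero_mul_pow_natAbs_sub (by rwa [Real.norm_of_nonneg hq0.le]) η₀).mul_left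
      _).congr_fun fun x => by
        rw [Real.exp_neg_mul_abs_intCast_sub]
        ring
  refine ⟨hsum.summable, hsum.tsum_eq.trans ?_⟩
  have hexp : Real.exp a = q⁻¹ := by rw [hq_def, Real.exp_neg, inv_inv]
  have hexp_two_mul : Real.exp (2 * a) = q⁻¹ ^ 2 := by rw [two_mul, Real.exp_add, hexp, sq]
  have hexp_mul : Real.exp (-a * η₀) = q ^ η₀ := by rw [mul_comm, Real.exp_nat_mul]
  rw [hexp, hexp_two_mul, hexp_mul]
  have h_one_sub : 1 - q ≠ 0 := by linarith
  have h_one_sub_sq : 1 - q ^ 2 ≠ 0 := by nlinarith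
  field_simp
  ring
end

section
/- Let k be a natural number, let c_b be a natural number, let c ≥ 0 and n ≥ 0 be real numbers, and let a, b : Fin k → ℝ be nonnegative functions with ∑_i a(i) ≤ n and ∑_j b(j) ≤ n. Let S be a finite set of pairs (i,j) ∈ Fin k × Fin k such that every index i occurs as the first coordinate of at most c_b pairs of S, and every index j occurs as the second coordinate of at most c_b pairs of S. Then ∑_{(i,j)∈S} (a(i) + c)·(b(j) + c) ≤ ∑_{(i,j)∈S} a(i)·b(j) + c²·c_b·k + 2·c·c_b·n. -/
/-- Deterministic core of Theorem 4.6: adding `c` expected dummy records to each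
bin increases the number of candidate matches by at most `c²·c_b·k + 2·c·c_b·n`. -/
theorem laplace_cost_bound (k c_b : ℕ) (c n : ℝ) (hc : 0 ≤ c) (hn : 0 ≤ n)
    (a b : Fin k → ℝ) (ha : ∀ i, 0 ≤ a i) (hb : ∀ j, 0 ≤ b j)
    (hsa : ∑ i, a i ≤ n) (hsb : ∑ j, b j ≤ n)
    (S : Finset (Fin k × Fin k))
    (hS1 : ∀ i : Fin k, (S.filter fun p => p.1 = i).card ≤ c_b)
    (hS2 : ∀ j : Fin k, (S.filter fun p => p.2 = j).card ≤ c_b) :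
    ∑ p ∈ S, (a p.1 + c) * (b p.2 + c) ≤
      ∑ p ∈ S, a p.1 * b p.2 + c ^ 2 * (c_b : ℝ) * (k : ℝ) + 2 * c * (c_b : ℝ) * n := by
  have hfib1 : ∑ p ∈ S, a p.1 ≤ (c_b : ℝ) * n := by
    calc ∑ p ∈ S, a p.1
        = ∑ i : Fin k, ∑ p ∈ S.filter fun p => p.1 = i, a p.1 :=
          (Finset.sum_fiberwise_of_maps_to (fun p _ => Finset.mem_univ p.1) _).symm
      _ = ∑ i : Fin k, ((S.filter fun p => p.1 = i).card : ℝ) * a i := by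
          refine Finset.sum_congr rfl fun i _ => ?_
          rw [Finset.sum_congr rfl fun p hp => by
            rw [(Finset.mem_filter.mp hp).2], Finset.sum_const, nsmul_eq_mul]
      _ ≤ ∑ i : Fin k, (c_b : ℝ) * a i := by
          refine Finset.sum_le_sum fun i _ => ?_
          exact mul_le_mul_of_nonneg_right (by exact_mod_cast hS1 i) (ha i)
      _ = (c_b : ℝ) * ∑ i, a i := by rw [Finset.mul_sum]
      _ ≤ (c_b : ℝ) * n := mul_le_mul_of_nonneg_left hsa (by positivity)
  have hfib2 : ∑ p ∈ S, b p.2 ≤ (c_b : ℝ) * n := by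
    calc ∑ p ∈ S, b p.2
        = ∑ j : Fin k, ∑ p ∈ S.filter fun p => p.2 = j, b p.2 :=
          (Finset.sum_fiberwise_of_maps_to (fun p _ => Finset.mem_univ p.2) _).symm
      _ = ∑ j : Fin k, ((S.filter fun p => p.2 = j).card : ℝ) * b j := by
          refine Finset.sum_congr rfl fun j _ => ?_
          rw [Finset.sum_congr rfl fun p hp => by
            rw [(Finset.mem_filter.mp hp).2], Finset.sum_const, nsmul_eq_mul]
      _ ≤ ∑ j : Fin k, (c_b : ℝ) * b j := by
          refine Finset.sum_le_sum fun j _ => ?_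
          exact mul_le_mul_of_nonneg_right (by exact_mod_cast hS2 j) (hb j)
      _ = (c_b : ℝ) * ∑ j, b j := by rw [Finset.mul_sum]
      _ ≤ (c_b : ℝ) * n := mul_le_mul_of_nonneg_left hsb (by positivity)
  have hcard : (S.card : ℝ) ≤ (c_b : ℝ) * (k : ℝ) := by
    have : S.card ≤ c_b * k := by
      rw [Finset.card_eq_sum_card_fiberwise (f := fun p => p.1)
        (fun p _ => Finset.mem_univ p.1)]
      calc ∑ i : Fin k, (S.filter fun p => p.1 = i).card
          ≤ ∑ _i : Fin k, c_b := Finset.sum_le_sum fun i _ => hS1 i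
        _ = k * c_b := by simp [Finset.sum_const, Finset.card_univ, mul_comm]
        _ = c_b * k := mul_comm _ _
    exact_mod_cast this
  have hexp : ∑ p ∈ S, (a p.1 + c) * (b p.2 + c)
      = ∑ p ∈ S, a p.1 * b p.2 + c * ∑ p ∈ S, a p.1 + c * ∑ p ∈ S, b p.2
        + c ^ 2 * S.card := by
    rw [Finset.mul_sum, Finset.mul_sum, ← Finset.sum_add_distrib,
      ← Finset.sum_add_distrib]
    rw [show (c ^ 2 * S.card : ℝ) = ∑ _p ∈ S, c ^ 2 by
      rw [Finset.sum_const, nsmul_eq_mul, mul_comm]]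
    rw [← Finset.sum_add_distrib]
    exact Finset.sum_congr rfl fun p _ => by ring
  rw [hexp]
  have h1 : c * ∑ p ∈ S, a p.1 ≤ c * ((c_b : ℝ) * n) :=
    mul_le_mul_of_nonneg_left hfib1 hc
  have h2 : c * ∑ p ∈ S, b p.2 ≤ c * ((c_b : ℝ) * n) :=
    mul_le_mul_of_nonneg_left hfib2 hc
  have h3 : c ^ 2 * (S.card : ℝ) ≤ c ^ 2 * ((c_b : ℝ) * (k : ℝ)) :=
    mul_le_mul_of_nonneg_left hcard (by positivity)
  nlinarith [h1, h2, h3]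
end

section
/- Let k and k' be integers with 1 ≤ k' ≤ k and let ε ≥ 0. (Upper bound) For every function p : {0,…,k−1} → ℝ with p(i) > 0 for all i, ∑_{i=0}^{k−1} p(i) = 1, and p(i) ≤ e^{ε}·p(i') for all i, i', it holds that ∑_{i=0}^{k'−1} p(i) ≤ k'·e^{ε}/(k − k' + k'·e^{ε}). (Attainment) The function defined by p(i) = e^{ε}/(k − k' + k'·e^{ε}) for 0 ≤ i ≤ k'−1 and p(i) = 1/(k − k' + k'·e^{ε}) for k' ≤ i ≤ k−1 satisfies all the constraints and achieves ∑_{i=0}^{k'−1} p(i) = k'·e^{ε}/(k − k' + k'·e^{ε}). -/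
/-- Appendix C.2.3 optimization: under the ε-local-DP ratio constraints, the
expected recall `∑_{i<k'} p_i` is at most `k'e^ε/(k − k' + k'e^ε)`, and this bound
is attained by the displayed two-valued distribution. -/
theorem rr_optimal_recall (k k' : ℕ) (hk' : 1 ≤ k') (hkk : k' ≤ k)
    (ε : ℝ) (hε : 0 ≤ ε) :
    (∀ p : ℕ → ℝ, (∀ i < k, 0 < p i) → (∑ i ∈ Finset.range k, p i = 1) →
      (∀ i < k, ∀ i' < k, p i ≤ Real.exp ε * p i') →
      ∑ i ∈ Finset.range k', p i ≤
        (k' : ℝ) * Real.exp ε / ((k : ℝ) - (k' : ℝ) + (k' : ℝ) * Real.exp ε)) ∧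
    (let q : ℕ → ℝ := fun i =>
      if i < k' then Real.exp ε / ((k : ℝ) - (k' : ℝ) + (k' : ℝ) * Real.exp ε)
      else 1 / ((k : ℝ) - (k' : ℝ) + (k' : ℝ) * Real.exp ε)
     (∀ i < k, 0 < q i) ∧ (∑ i ∈ Finset.range k, q i = 1) ∧
      (∀ i < k, ∀ i' < k, q i ≤ Real.exp ε * q i') ∧
      ∑ i ∈ Finset.range k', q i =
        (k' : ℝ) * Real.exp ε / ((k : ℝ) - (k' : ℝ) + (k' : ℝ) * Real.exp ε)) := by

  have hE1 : (1:ℝ) ≤ Real.exp ε := Real.one_le_exp hε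
  have hE0 : (0:ℝ) < Real.exp ε := Real.exp_pos ε
  have hkk' : (k':ℝ) ≤ k := by exact_mod_cast hkk
  have hk'1 : (1:ℝ) ≤ k' := by exact_mod_cast hk'
  set E := Real.exp ε with hEdef
  set D := (k:ℝ) - (k':ℝ) + (k':ℝ) * E with hDdef
  have hD : 0 < D := by nlinarith
  constructor
  · intro p hpos hsum hratio
    set S := ∑ i ∈ Finset.range k', p i with hS
    have hsplit : S + ∑ i ∈ Finset.Ico k' k, p i = 1 := by
      rw [hS, Finset.sum_range_add_sum_Ico _ hkk, hsum]
    set T := ∑ i ∈ Finset.Ico k' k, p i with hT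
    have key : S * ((k:ℝ) - k') ≤ (k':ℝ) * E * T := by
      have h1 : ∀ i ∈ Finset.range k', p i * ((k:ℝ) - k') ≤ E * T := by
        intro i hi
        have hik : i < k := lt_of_lt_of_le (Finset.mem_range.mp hi) hkk
        have hconst : p i * ((k:ℝ) - k') = ∑ _j ∈ Finset.Ico k' k, p i := by
          rw [Finset.sum_const, Nat.card_Ico, nsmul_eq_mul, Nat.cast_sub hkk]
          ring
        rw [hconst, hT, Finset.mul_sum]
        apply Finset.sum_le_sum
        intro j hj
        exact hratio i hik j (Finset.mem_Ico.mp hj).2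
      calc S * ((k:ℝ)-k') = ∑ i ∈ Finset.range k', p i * ((k:ℝ)-k') := by
            rw [hS, Finset.sum_mul]
        _ ≤ ∑ _i ∈ Finset.range k', E * T := Finset.sum_le_sum h1
        _ = (k':ℝ) * E * T := by
            rw [Finset.sum_const, Finset.card_range, nsmul_eq_mul]; ring
    rw [le_div_iff₀ hD]
    have hexp : S * D = S * ((k:ℝ) - ↑k') + S * (↑k' * E) := by rw [hDdef]; ring
    have h2 : (↑k':ℝ) * E * (S + T) = ↑k' * E := by rw [hsplit]; ring
    nlinarith [key, hexp, h2]
  · intro q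
    have hq_lt : ∀ i, i < k' → q i = E / D := fun i hi => if_pos hi
    have hq_ge : ∀ i, ¬ i < k' → q i = 1 / D := fun i hi => if_neg hi
    have hqub : ∀ i, q i ≤ E / D := by
      intro i
      by_cases hi : i < k'
      · rw [hq_lt i hi]
      · rw [hq_ge i hi]; gcongr
    have hqlb : ∀ i, 1 / D ≤ q i := by
      intro i
      by_cases hi : i < k'
      · rw [hq_lt i hi]; gcongr
      · rw [hq_ge i hi]
    refine ⟨?_, ?_, ?_, ?_⟩
    · intro i _
      by_cases hi : i < k'
      · rw [hq_lt i hi]; positivity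
      · rw [hq_ge i hi]; positivity
    · rw [← Finset.sum_range_add_sum_Ico _ hkk]
      have h1 : ∑ i ∈ Finset.range k', q i = (k':ℝ) * (E / D) := by
        rw [Finset.sum_congr rfl (fun i hi => hq_lt i (Finset.mem_range.mp hi)),
          Finset.sum_const, Finset.card_range, nsmul_eq_mul]
      have h2 : ∑ i ∈ Finset.Ico k' k, q i = ((k:ℝ) - k') * (1 / D) := by
        rw [Finset.sum_congr rfl (fun i hi => hq_ge i (not_lt.mpr (Finset.mem_Ico.mp hi).1)),
          Finset.sum_const, Nat.card_Ico, nsmul_eq_mul, Nat.cast_sub hkk]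
      rw [h1, h2]
      field_simp
      ring
    · intro i _ i' _
      calc q i ≤ E / D := hqub i
        _ = E * (1 / D) := by ring
        _ ≤ E * q i' := by
            exact mul_le_mul_of_nonneg_left (hqlb i') (le_of_lt hE0)
    · rw [Finset.sum_congr rfl (fun i hi => hq_lt i (Finset.mem_range.mp hi)),
        Finset.sum_const, Finset.card_range, nsmul_eq_mul, mul_div_assoc]
end
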